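/- arXiv:1611.05518 — 8 statements merged into one kernel-verified Lean document; each statement's English description precedes it below -/
import Mathlib

section
/- Fix σ₁, σ₂, U, τ > 0 and let χ(K) = C^σ(U,K,τ) for K > 0, where C^σ is the explicit PCLVG call price. Then χ is continuously differentiable on (0,∞) (in particular the two explicit pieces match to first order at K = U), twice continuously differentiable on (0,U) and on (U,∞), and satisfies the ordinary differential equation σ₁²·χ''(K) − χ(K)/τ² = −(U−K)/τ² for 0 < K < U and σ₂²·χ''(K) − χ(K)/τ² = 0 for K > U; moreover lim_{K→0+} χ(K) = U and lim_{K→∞} χ(K) = 0. -/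
open MeasureTheory Filter Set

/-- Standard normal cumulative distribution function. -/
noncomputable def stdNormalCDF (x : ℝ) : ℝ :=
  (Real.sqrt (2 * Real.pi))⁻¹ * ∫ y in Set.Iic x, Real.exp (-(y ^ 2) / 2)

/-- Black–Scholes call price with zero interest and dividend rates. -/
noncomputable def bsCall (S K τ σ : ℝ) : ℝ :=
  let d1 := (Real.log (S / K) + σ ^ 2 * τ / 2) / (σ * Real.sqrt τ)
  S * stdNormalCDF d1 - K * stdNormalCDF (d1 - σ * Real.sqrt τ)

/-- Black–Scholes put price with zero interest and dividend rates. -/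
noncomputable def bsPut (S K τ σ : ℝ) : ℝ := bsCall S K τ σ - S + K

/-- The denominator appearing in the PCLVG call price formula. -/
noncomputable def pclvgD (σ1 σ2 U τ : ℝ) : ℝ :=
  1 / σ1 + 1 / σ2 - (1 / σ2 - 1 / σ1) * Real.exp (-2 * U / (σ1 * τ))

/-- The explicit PCLVG call price `C^σ(U,K,τ)`. -/
noncomputable def pclvgCall (σ1 σ2 U K τ : ℝ) : ℝ :=
  if K < U then
    (U - K) +
      τ * Real.exp (-(U - K) / (σ1 * τ)) * (1 - Real.exp (-2 * K / (σ1 * τ))) /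
        pclvgD σ1 σ2 U τ
  else
    τ * Real.exp (-(K - U) / (σ2 * τ)) * (1 - Real.exp (-2 * U / (σ1 * τ))) /
      pclvgD σ1 σ2 U τ

/-- The PCLVG put price `P^σ(U,K,τ) = C^σ(U,K,τ) − (U − K)`. -/
noncomputable def pclvgPut (σ1 σ2 U K τ : ℝ) : ℝ := pclvgCall σ1 σ2 U K τ - (U - K)

/-!
Put `a = 1/(σ₁τ)` and `b = 1/(σ₂τ)`. Below the barrier the call price is `U - K` plus a multiple
of `sinh (a K)`, above it a multiple of `exp (-b (K - U))`: these solve the homogeneous equations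
`σ₁²y'' = y/τ²` and `σ₂²y'' = y/τ²` and vanish at `0` and at `∞` respectively, which gives the two
differential equations and both limits. The paper's denominator `D` is `2τ exp (-a U)` times
`pclvgPasting a b U`, minus the Wronskian of these two solutions at `U`; dividing by it is exactly
what makes the two pieces agree to first order at the barrier.
-/

open Real Topology

section Gluing

variable {α β : Type*} [TopologicalSpace α] [LinearOrder α] {g h : α → β} {U x : α}

theorem ite_lt_eventuallyEq_left [ClosedIciTopology α] (hx : x < U) :
    (fun y => if y < U then g y else h y) =ᶠ[𝓝 x] g :=
  (eventually_lt_nhds hx).mono fun _ hy => if_pos hy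

theorem ite_lt_eventuallyEq_right [ClosedIicTopology α] (hx : U < x) :
    (fun y => if y < U then g y else h y) =ᶠ[𝓝 x] h :=
  (eventually_gt_nhds hx).mono fun _ hy => if_neg hy.not_gt

end Gluing

section SmoothGluing

variable {F : Type*} [NormedAddCommGroup F] [NormedSpace ℝ F] {g h : ℝ → F} {U : ℝ}

theorem hasDerivAt_ite_lt (hg : Differentiable ℝ g) (hh : Differentiable ℝ h)
    (hval : g U = h U) (hder : deriv g U = deriv h U) (x : ℝ) :
    HasDerivAt (fun y => if y < U then g y else h y)
      (if x < U then deriv g x else deriv h x) x := by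
  rcases lt_trichotomy x U with hx | rfl | hx
  · rw [if_pos hx, (ite_lt_eventuallyEq_left hx).hasDerivAt_iff]
    exact (hg x).hasDerivAt
  · rw [if_neg (lt_irrefl x)]
    have hleft : HasDerivWithinAt (fun y => if y < x then g y else h y) (deriv h x) (Iic x) x := by
      refine (hder ▸ (hg x).hasDerivAt.hasDerivWithinAt).congr_of_mem (fun y hy => ?_)
        self_mem_Iic
      rcases (mem_Iic.mp hy).lt_or_eq with hy | rfl
      · exact if_pos hy
      · exact (if_neg (lt_irrefl y)).trans hval.symm
    have hright : HasDerivWithinAt (fun y => if y < x then g y else h y) (deriv h x) (Ici x) x :=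
      (hh x).hasDerivAt.hasDerivWithinAt.congr_of_mem (fun y hy => if_neg (not_lt.mpr hy))
        self_mem_Ici
    simpa only [Iic_union_Ici, hasDerivWithinAt_univ] using hleft.union hright
  · rw [if_neg hx.not_gt, (ite_lt_eventuallyEq_right hx).hasDerivAt_iff]
    exact (hh x).hasDerivAt

theorem contDiff_one_ite_lt (hg : ContDiff ℝ 1 g) (hh : ContDiff ℝ 1 h)
    (hval : g U = h U) (hder : deriv g U = deriv h U) :
    ContDiff ℝ 1 (fun y => if y < U then g y else h y) := by
  have hF := hasDerivAt_ite_lt (hg.differentiable one_ne_zero) (hh.differentiable one_ne_zero)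
    hval hder
  rw [contDiff_one_iff_deriv]
  refine ⟨fun x => (hF x).differentiableAt, ?_⟩
  rw [show deriv (fun y => if y < U then g y else h y) =
      fun x => if x < U then deriv g x else deriv h x from funext fun x => (hF x).deriv]
  refine continuous_if (fun x hx => ?_) (hg.continuous_deriv le_rfl).continuousOn
    (hh.continuous_deriv le_rfl).continuousOn
  rw [show {x : ℝ | x < U} = Iio U from rfl, frontier_Iio, mem_singleton_iff] at hx
  rw [hx, hder]

end SmoothGluing

noncomputable def pclvgPasting (a b U : ℝ) : ℝ := a * cosh (a * U) + b * sinh (a * U)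

noncomputable def pclvgCallBelow (a b U K : ℝ) : ℝ := U - K + sinh (a * K) / pclvgPasting a b U

noncomputable def pclvgCallAbove (a b U K : ℝ) : ℝ :=
  sinh (a * U) * exp (-b * (K - U)) / pclvgPasting a b U

section Branches

variable {a b U : ℝ}

theorem pclvgPasting_pos (ha : 0 < a) (hb : 0 ≤ b) (hU : 0 ≤ U) : 0 < pclvgPasting a b U :=
  add_pos_of_pos_of_nonneg (mul_pos ha (cosh_pos _))
    (mul_nonneg hb (sinh_nonneg_iff.mpr (mul_nonneg ha.le hU)))

theorem contDiff_pclvgCallBelow {n : WithTop ℕ∞} : ContDiff ℝ n (pclvgCallBelow a b U) := by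
  unfold pclvgCallBelow
  fun_prop

theorem contDiff_pclvgCallAbove {n : WithTop ℕ∞} : ContDiff ℝ n (pclvgCallAbove a b U) := by
  unfold pclvgCallAbove
  fun_prop

theorem hasDerivAt_pclvgCallBelow (K : ℝ) :
    HasDerivAt (pclvgCallBelow a b U) (-1 + a * cosh (a * K) / pclvgPasting a b U) K := by
  have hsinh := ((hasDerivAt_id' K).const_mul a).sinh.div_const (pclvgPasting a b U)
  exact (((hasDerivAt_id' K).const_sub U).add hsinh).congr_deriv (by ring)

theorem deriv_pclvgCallBelow :
    deriv (pclvgCallBelow a b U) = fun K => -1 + a * cosh (a * K) / pclvgPasting a b U :=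
  funext fun K => (hasDerivAt_pclvgCallBelow K).deriv

theorem deriv_deriv_pclvgCallBelow (K : ℝ) :
    deriv (deriv (pclvgCallBelow a b U)) K = a ^ 2 * (pclvgCallBelow a b U K - (U - K)) := by
  rw [deriv_pclvgCallBelow]
  have hcosh := (((hasDerivAt_id' K).const_mul a).cosh.const_mul a).div_const (pclvgPasting a b U)
  rw [(hcosh.const_add (-1)).deriv, pclvgCallBelow]
  ring

theorem hasDerivAt_pclvgCallAbove (K : ℝ) :
    HasDerivAt (pclvgCallAbove a b U) (-b * pclvgCallAbove a b U K) K := by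
  have hexp := (((hasDerivAt_id' K).sub_const U).const_mul (-b)).exp
  exact ((hexp.const_mul (sinh (a * U))).div_const (pclvgPasting a b U)).congr_deriv
    (by rw [pclvgCallAbove]; ring)

theorem deriv_pclvgCallAbove :
    deriv (pclvgCallAbove a b U) = fun K => -b * pclvgCallAbove a b U K :=
  funext fun K => (hasDerivAt_pclvgCallAbove K).deriv

theorem deriv_deriv_pclvgCallAbove (K : ℝ) :
    deriv (deriv (pclvgCallAbove a b U)) K = b ^ 2 * pclvgCallAbove a b U K := by
  rw [deriv_pclvgCallAbove, ((hasDerivAt_pclvgCallAbove K).const_mul (-b)).deriv]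
  ring

theorem pclvgCallBelow_self_eq_above : pclvgCallBelow a b U U = pclvgCallAbove a b U U := by
  simp [pclvgCallBelow, pclvgCallAbove]

theorem deriv_pclvgCallBelow_self_eq_above (hP : pclvgPasting a b U ≠ 0) :
    deriv (pclvgCallBelow a b U) U = deriv (pclvgCallAbove a b U) U := by
  simp only [deriv_pclvgCallBelow, deriv_pclvgCallAbove, pclvgCallAbove, sub_self, mul_zero,
    exp_zero, mul_one]
  field_simp
  rw [pclvgPasting]
  ring

theorem pclvgCallBelow_zero : pclvgCallBelow a b U 0 = U := by
  simp [pclvgCallBelow]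

theorem tendsto_pclvgCallAbove_atTop (hb : 0 < b) :
    Tendsto (pclvgCallAbove a b U) atTop (𝓝 0) := by
  have hexp : Tendsto (fun K => exp (-b * (K - U))) atTop (𝓝 0) :=
    tendsto_exp_atBot.comp <|
      (tendsto_atTop_add_const_right _ (-U) tendsto_id).const_mul_atTop_of_neg (neg_neg_of_pos hb)
  rw [show (0 : ℝ) = sinh (a * U) * 0 / pclvgPasting a b U by simp]
  exact (hexp.const_mul (sinh (a * U))).div_const (pclvgPasting a b U)

end Branches

theorem pclvgD_eq {σ1 σ2 U τ : ℝ} (hτ : τ ≠ 0) :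
    pclvgD σ1 σ2 U τ =
      2 * τ * exp (-((σ1 * τ)⁻¹ * U)) * pclvgPasting (σ1 * τ)⁻¹ (σ2 * τ)⁻¹ U := by
  unfold pclvgD pclvgPasting
  rw [cosh_eq, sinh_eq,
    show -2 * U / (σ1 * τ) = -((σ1 * τ)⁻¹ * U) + -((σ1 * τ)⁻¹ * U) by ring, exp_add, exp_neg]
  field_simp
  ring

theorem pclvgCall_eq_ite {σ1 σ2 U τ : ℝ} (hτ : τ ≠ 0) (K : ℝ) :
    pclvgCall σ1 σ2 U K τ = if K < U then pclvgCallBelow (σ1 * τ)⁻¹ (σ2 * τ)⁻¹ U K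
      else pclvgCallAbove (σ1 * τ)⁻¹ (σ2 * τ)⁻¹ U K := by
  set a := (σ1 * τ)⁻¹
  have hscale : 2 * τ * exp (-(a * U)) ≠ 0 := by positivity
  unfold pclvgCall pclvgCallBelow pclvgCallAbove
  rw [pclvgD_eq hτ]
  split_ifs
  · have hnum : τ * exp (-(U - K) / (σ1 * τ)) * (1 - exp (-2 * K / (σ1 * τ))) =
        2 * τ * exp (-(a * U)) * sinh (a * K) := by
      rw [sinh_eq, show -(U - K) / (σ1 * τ) = -(a * U) + a * K by ring,
        show -2 * K / (σ1 * τ) = -(a * K) + -(a * K) by ring, exp_add, exp_add, exp_neg (a * K)]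
      field_simp
    rw [hnum, mul_div_mul_left _ _ hscale]
  · have hnum : τ * exp (-(K - U) / (σ2 * τ)) * (1 - exp (-2 * U / (σ1 * τ))) =
        2 * τ * exp (-(a * U)) * (sinh (a * U) * exp (-(σ2 * τ)⁻¹ * (K - U))) := by
      rw [sinh_eq, show -(K - U) / (σ2 * τ) = -(σ2 * τ)⁻¹ * (K - U) by ring,
        show -2 * U / (σ1 * τ) = -(a * U) + -(a * U) by ring, exp_add, exp_neg (a * U)]
      field_simp
    rw [hnum, mul_div_mul_left _ _ hscale]

/-- For fixed `σ₁, σ₂, U, τ > 0`, the function `χ(K) = C^σ(U,K,τ)` is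
continuously differentiable on `(0,∞)`, twice continuously differentiable on `(0,U)` and on
`(U,∞)`, satisfies `σ₁²χ'' − χ/τ² = −(U−K)/τ²` on `(0,U)` and `σ₂²χ'' − χ/τ² = 0` on `(U,∞)`,
and has the boundary limits `χ(0+) = U`, `χ(∞) = 0`. -/
theorem pclvgCall_strike_ODE (σ1 σ2 U τ : ℝ)
    (h1 : 0 < σ1) (h2 : 0 < σ2) (hU : 0 < U) (hτ : 0 < τ) :
    ContDiffOn ℝ 1 (fun K => pclvgCall σ1 σ2 U K τ) (Set.Ioi 0) ∧
    ContDiffOn ℝ 2 (fun K => pclvgCall σ1 σ2 U K τ) (Set.Ioo 0 U) ∧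
    ContDiffOn ℝ 2 (fun K => pclvgCall σ1 σ2 U K τ) (Set.Ioi U) ∧
    (∀ K ∈ Set.Ioo 0 U,
      σ1 ^ 2 * deriv (deriv (fun K' => pclvgCall σ1 σ2 U K' τ)) K -
        pclvgCall σ1 σ2 U K τ / τ ^ 2 = -(U - K) / τ ^ 2) ∧
    (∀ K ∈ Set.Ioi U,
      σ2 ^ 2 * deriv (deriv (fun K' => pclvgCall σ1 σ2 U K' τ)) K -
        pclvgCall σ1 σ2 U K τ / τ ^ 2 = 0) ∧
    Filter.Tendsto (fun K => pclvgCall σ1 σ2 U K τ) (nhdsWithin 0 (Set.Ioi 0)) (nhds U) ∧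
    Filter.Tendsto (fun K => pclvgCall σ1 σ2 U K τ) Filter.atTop (nhds 0) := by
  simp only [pclvgCall_eq_ite hτ.ne']
  set a := (σ1 * τ)⁻¹
  set b := (σ2 * τ)⁻¹
  have hb : 0 < b := by positivity
  have hP : 0 < pclvgPasting a b U := pclvgPasting_pos (by positivity) hb.le hU.le
  have hbelow : ContDiff ℝ 2 (pclvgCallBelow a b U) := contDiff_pclvgCallBelow
  have habove : ContDiff ℝ 2 (pclvgCallAbove a b U) := contDiff_pclvgCallAbove
  refine ⟨(contDiff_one_ite_lt (hbelow.of_le one_le_two) (habove.of_le one_le_two)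
      pclvgCallBelow_self_eq_above (deriv_pclvgCallBelow_self_eq_above hP.ne')).contDiffOn,
    hbelow.contDiffOn.congr fun K hK => if_pos hK.2,
    habove.contDiffOn.congr fun K hK => if_neg (mem_Ioi.mp hK).not_gt,
    fun K hK => ?_, fun K hK => ?_, ?_, ?_⟩
  · rw [(ite_lt_eventuallyEq_left hK.2).deriv.deriv_eq, deriv_deriv_pclvgCallBelow, if_pos hK.2]
    have hscale : σ1 ^ 2 * a ^ 2 = (τ ^ 2)⁻¹ := by simp only [a]; field_simp
    linear_combination (pclvgCallBelow a b U K - (U - K)) * hscale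
  · rw [(ite_lt_eventuallyEq_right (mem_Ioi.mp hK)).deriv.deriv_eq, deriv_deriv_pclvgCallAbove,
      if_neg (mem_Ioi.mp hK).not_gt]
    have hscale : σ2 ^ 2 * b ^ 2 = (τ ^ 2)⁻¹ := by simp only [b]; field_simp
    linear_combination pclvgCallAbove a b U K * hscale
  · have h0 := (contDiff_pclvgCallBelow (a := a) (b := b) (U := U) (n := 0)).continuous.tendsto 0
    rw [pclvgCallBelow_zero] at h0
    exact (h0.congr' (ite_lt_eventuallyEq_left hU).symm).mono_left nhdsWithin_le_nhds
  · exact (tendsto_pclvgCallAbove_atTop hb).congr'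
      ((eventually_ge_atTop U).mono fun K hK => (if_neg (not_lt.mpr hK)).symm)
end

section
/- Fix U > 0, σ₁, σ₂ > 0 and K > U. Suppose Σ : (0,∞) → (0,∞) satisfies C^bs(U, K, τ, Σ(τ)) = C^σ(U,K,τ) for all τ > 0, i.e. Σ(τ) is the Black–Scholes implied volatility of the PCLVG call price with strike K and time to maturity τ. Then lim_{τ→0+} Σ(τ) = √σ₂ · log(K/U) / √(2(K−U)). -/
open MeasureTheory Filter Set

/-!
Write `k = log (K / U)` and `v = Σ(τ) √τ` for the total volatility. In these variables the
Black–Scholes call is a strictly increasing function `g(v)` with `g(0+) = 0` and vega `U φ(d₁)`.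
The Gaussian tail bound `N(x) ≤ exp (-x² / 2)` for `x ≤ 0` bounds `g(v)` from above, the mean
value theorem on `[θ v, v]` bounds it from below, and letting `θ → 1` gives
`v² log g(v) → -k² / 2` as `v → 0+`. On the other side the PCLVG formula gives
`τ log C^σ(τ) → -(K - U) / σ₂`. Since `g(v(τ)) = C^σ(τ) → 0` forces `v(τ) → 0`, the quotient of
the two limits is `Σ(τ)² = v² / τ → σ₂ k² / (2 (K - U))`.
-/

open Real ProbabilityTheory Topology

section StdNormal

lemma stdNormalCDF_eq_integral (x : ℝ) :
    stdNormalCDF x = ∫ y in Iic x, gaussianPDFReal 0 1 y := by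
  simp [stdNormalCDF, gaussianPDFReal, integral_const_mul]

lemma gaussianPDFReal_zero_one (x : ℝ) :
    gaussianPDFReal 0 1 x = gaussianPDFReal 0 1 0 * exp (-x ^ 2 / 2) := by
  simp [gaussianPDFReal]

lemma continuous_gaussianPDFReal_zero_one : Continuous (gaussianPDFReal 0 1) := by
  unfold gaussianPDFReal
  fun_prop

lemma gaussianPDFReal_zero_one_monotoneOn : MonotoneOn (gaussianPDFReal 0 1) (Iic 0) := by
  intro x hx y hy hxy
  rw [gaussianPDFReal_zero_one x, gaussianPDFReal_zero_one y]
  exact mul_le_mul_of_nonneg_left (exp_le_exp.2 (by nlinarith [mem_Iic.1 hy]))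
    (gaussianPDFReal_nonneg 0 1 0)

lemma stdNormalCDF_nonneg (x : ℝ) : 0 ≤ stdNormalCDF x := by
  rw [stdNormalCDF_eq_integral]
  exact integral_nonneg (gaussianPDFReal_nonneg 0 1)

lemma hasDerivAt_stdNormalCDF (x : ℝ) :
    HasDerivAt stdNormalCDF (gaussianPDFReal 0 1 x) x := by
  have hφ := integrable_gaussianPDFReal 0 1
  have hφc := continuous_gaussianPDFReal_zero_one
  have hsplit : stdNormalCDF =
      fun x => stdNormalCDF 0 + ∫ y in (0 : ℝ)..x, gaussianPDFReal 0 1 y := by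
    funext z
    rw [stdNormalCDF_eq_integral, stdNormalCDF_eq_integral,
      ← intervalIntegral.integral_Iic_sub_Iic hφ.integrableOn hφ.integrableOn]
    ring
  rw [hsplit]
  exact (intervalIntegral.integral_hasDerivAt_right hφ.intervalIntegrable
    hφc.aestronglyMeasurable.stronglyMeasurableAtFilter hφc.continuousAt).const_add _

lemma gaussianPDFReal_le_exp_mul_of_le_of_nonpos {x y : ℝ} (hyx : y ≤ x) (hx : x ≤ 0) :
    gaussianPDFReal 0 1 y ≤ exp (-x ^ 2 / 2) * gaussianPDFReal x 1 y := by
  rw [← zero_add x, ← gaussianPDFReal_sub, zero_add, gaussianPDFReal_zero_one y,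
    gaussianPDFReal_zero_one (y - x), mul_left_comm, ← exp_add]
  gcongr
  · exact gaussianPDFReal_nonneg 0 1 0
  · -- `y ^ 2 ≥ x ^ 2 + (y - x) ^ 2` since `x (y - x) ≥ 0`
    nlinarith

lemma stdNormalCDF_le_exp {x : ℝ} (hx : x ≤ 0) : stdNormalCDF x ≤ exp (-x ^ 2 / 2) := by
  have hint := (integrable_gaussianPDFReal x 1).const_mul (exp (-x ^ 2 / 2))
  rw [stdNormalCDF_eq_integral]
  calc ∫ y in Iic x, gaussianPDFReal 0 1 y
      ≤ ∫ y in Iic x, exp (-x ^ 2 / 2) * gaussianPDFReal x 1 y :=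
        setIntegral_mono_on (integrable_gaussianPDFReal 0 1).integrableOn hint.integrableOn
          measurableSet_Iic fun y hy => gaussianPDFReal_le_exp_mul_of_le_of_nonpos hy hx
    _ ≤ ∫ y, exp (-x ^ 2 / 2) * gaussianPDFReal x 1 y :=
        setIntegral_le_integral hint
          (Eventually.of_forall fun y => mul_nonneg (exp_pos _).le (gaussianPDFReal_nonneg x 1 y))
    _ = exp (-x ^ 2 / 2) := by
        rw [integral_const_mul, integral_gaussianPDFReal_eq_one x one_ne_zero, mul_one]

lemma tendsto_stdNormalCDF_atBot : Tendsto stdNormalCDF atBot (𝓝 0) := by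
  have hsq : Tendsto (fun x : ℝ => -x ^ 2 / 2) atBot atBot := by
    have := ((tendsto_pow_atTop two_ne_zero).comp tendsto_neg_atBot_atTop).atTop_div_const
      (two_pos (α := ℝ))
    simpa [Function.comp_def, neg_div] using tendsto_neg_atTop_atBot.comp this
  refine tendsto_of_tendsto_of_tendsto_of_le_of_le' tendsto_const_nhds
    (tendsto_exp_atBot.comp hsq) (Eventually.of_forall stdNormalCDF_nonneg) ?_
  filter_upwards [Iic_mem_atBot 0] with x hx using stdNormalCDF_le_exp hx

end StdNormal

section BlackScholes

/-- `d₁` as a function of the log-moneyness `k = log (K / S)` and the total volatility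
`v = σ √τ`. -/
noncomputable def bsD1 (k v : ℝ) : ℝ := -k / v + v / 2

noncomputable def bsCallTotalVol (S k v : ℝ) : ℝ :=
  S * stdNormalCDF (bsD1 k v) - S * exp k * stdNormalCDF (bsD1 k v - v)

lemma bsCall_eq_bsCallTotalVol {S K τ : ℝ} (σ : ℝ) (hS : 0 < S) (hK : 0 < K) (hτ : 0 ≤ τ) :
    bsCall S K τ σ = bsCallTotalVol S (log (K / S)) (σ * √τ) := by
  have hd1 : (log (S / K) + σ ^ 2 * τ / 2) / (σ * √τ) = bsD1 (log (K / S)) (σ * √τ) := by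
    have hvar : σ ^ 2 * τ = (σ * √τ) ^ 2 := by rw [mul_pow, sq_sqrt hτ]
    rw [bsD1, ← inv_div K, log_inv, neg_div, add_div, hvar]
    rcases eq_or_ne (σ * √τ) 0 with h | h
    · simp [h]
    · field_simp
  simp only [bsCall, bsCallTotalVol, hd1, exp_log (div_pos hK hS), mul_div_cancel₀ _ hS.ne']

lemma hasDerivAt_bsD1 (k : ℝ) {v : ℝ} (hv : v ≠ 0) :
    HasDerivAt (bsD1 k) (k / v ^ 2 + 1 / 2) v := by
  have h : bsD1 k = fun w => -k * w⁻¹ + w / 2 := by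
    funext w; simp [bsD1, div_eq_mul_inv]
  rw [h]
  exact (((hasDerivAt_inv hv).const_mul (-k)).add ((hasDerivAt_id' v).div_const 2)).congr_deriv
    (by field_simp)

lemma exp_mul_gaussianPDFReal_bsD1_sub (k : ℝ) {v : ℝ} (hv : v ≠ 0) :
    exp k * gaussianPDFReal 0 1 (bsD1 k v - v) = gaussianPDFReal 0 1 (bsD1 k v) := by
  rw [gaussianPDFReal_zero_one (bsD1 k v - v), gaussianPDFReal_zero_one (bsD1 k v),
    mul_left_comm, ← exp_add]
  congr 2
  simp only [bsD1]
  field_simp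
  ring

lemma hasDerivAt_bsCallTotalVol (S k : ℝ) {v : ℝ} (hv : v ≠ 0) :
    HasDerivAt (bsCallTotalVol S k) (S * gaussianPDFReal 0 1 (bsD1 k v)) v := by
  have hd1 := hasDerivAt_bsD1 k hv
  have := (((hasDerivAt_stdNormalCDF _).comp v hd1).const_mul S).sub
    (((hasDerivAt_stdNormalCDF _).comp v (hd1.sub (hasDerivAt_id v))).const_mul (S * exp k))
  refine this.congr_deriv ?_
  simp only [Pi.sub_apply, id]
  rw [← exp_mul_gaussianPDFReal_bsD1_sub k hv]
  ring

lemma bsCallTotalVol_strictMonoOn {S : ℝ} (hS : 0 < S) (k : ℝ) :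
    StrictMonoOn (bsCallTotalVol S k) (Ioi 0) := by
  refine strictMonoOn_of_deriv_pos (convex_Ioi 0)
    (fun v hv => (hasDerivAt_bsCallTotalVol S k (ne_of_gt hv)).continuousAt.continuousWithinAt)
    fun v hv => ?_
  rw [interior_Ioi] at hv
  rw [(hasDerivAt_bsCallTotalVol S k (ne_of_gt hv)).deriv]
  exact mul_pos hS (gaussianPDFReal_pos 0 1 _ one_ne_zero)

lemma tendsto_bsD1_atBot {k : ℝ} (hk : 0 < k) : Tendsto (bsD1 k) (𝓝[>] 0) atBot := by
  have hinv : Tendsto (fun v : ℝ => -k * v⁻¹) (𝓝[>] 0) atBot :=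
    (tendsto_const_mul_atBot_of_neg (neg_neg_of_pos hk)).2 tendsto_inv_nhdsGT_zero
  have hv : Tendsto (fun v : ℝ => v / 2) (𝓝[>] 0) (𝓝 0) := by
    simpa using ((continuous_id.div_const (2 : ℝ)).tendsto 0).mono_left nhdsWithin_le_nhds
  exact (hinv.atBot_add hv).congr fun v => by simp [bsD1, div_eq_mul_inv]

lemma tendsto_bsCallTotalVol_zero (S : ℝ) {k : ℝ} (hk : 0 < k) :
    Tendsto (bsCallTotalVol S k) (𝓝[>] 0) (𝓝 0) := by
  have hd1 := tendsto_bsD1_atBot hk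
  have hd1v : Tendsto (fun v => bsD1 k v - v) (𝓝[>] 0) atBot :=
    tendsto_atBot_mono' _ (eventually_mem_nhdsWithin.mono fun v (hv : 0 < v) => by linarith) hd1
  have h := ((tendsto_stdNormalCDF_atBot.comp hd1).const_mul S).sub
    ((tendsto_stdNormalCDF_atBot.comp hd1v).const_mul (S * exp k))
  rw [mul_zero, mul_zero, sub_zero] at h
  exact h

lemma bsCallTotalVol_pos {S k v : ℝ} (hS : 0 < S) (hk : 0 < k) (hv : 0 < v) :
    0 < bsCallTotalVol S k v := by
  have hmono := bsCallTotalVol_strictMonoOn hS k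
  have hhalf : 0 ≤ bsCallTotalVol S k (v / 2) := by
    refine le_of_tendsto (tendsto_bsCallTotalVol_zero S hk) ?_
    filter_upwards [Ioo_mem_nhdsGT (half_pos hv)] with s hs
    exact hmono.monotoneOn hs.1 (half_pos hv) hs.2.le
  exact hhalf.trans_lt (hmono (half_pos hv) hv (half_lt_self hv))

lemma bsD1_le_bsD1 {k s t : ℝ} (hk : 0 ≤ k) (hs : 0 < s) (hst : s ≤ t) :
    bsD1 k s ≤ bsD1 k t := by
  have : k / t ≤ k / s := div_le_div_of_nonneg_left hk hs hst
  simp only [bsD1, neg_div]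
  linarith

lemma bsD1_nonpos {k v : ℝ} (hv : 0 < v) (hvk : v ^ 2 ≤ 2 * k) : bsD1 k v ≤ 0 := by
  have : v / 2 ≤ k / v := by rw [div_le_div_iff₀ two_pos hv]; nlinarith
  simp only [bsD1, neg_div]
  linarith

lemma mul_bsD1 (k : ℝ) {w : ℝ} (hw : w ≠ 0) (θ : ℝ) (hθ : θ ≠ 0) :
    w * bsD1 k (θ * w) = θ * w ^ 2 / 2 - k / θ := by
  simp only [bsD1]
  field_simp
  ring

lemma bsCallTotalVol_le {S k v : ℝ} (hS : 0 ≤ S) (hv : 0 < v) (hvk : v ^ 2 ≤ 2 * k) :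
    bsCallTotalVol S k v ≤ S * exp (-bsD1 k v ^ 2 / 2) := by
  have hput : 0 ≤ S * exp k * stdNormalCDF (bsD1 k v - v) :=
    mul_nonneg (by positivity) (stdNormalCDF_nonneg _)
  have hcall := mul_le_mul_of_nonneg_left (stdNormalCDF_le_exp (bsD1_nonpos hv hvk)) hS
  rw [bsCallTotalVol]
  linarith

lemma sq_mul_log_bsCallTotalVol_le {S k v : ℝ} (hS : 0 < S) (hk : 0 < k) (hv : 0 < v)
    (hvk : v ^ 2 ≤ 2 * k) :
    v ^ 2 * log (bsCallTotalVol S k v) ≤ v ^ 2 * log S - (v ^ 2 / 2 - k) ^ 2 / 2 := by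
  have hlog : log (bsCallTotalVol S k v) ≤ log S - bsD1 k v ^ 2 / 2 :=
    calc _ ≤ log (S * exp (-bsD1 k v ^ 2 / 2)) :=
          log_le_log (bsCallTotalVol_pos hS hk hv) (bsCallTotalVol_le hS.le hv hvk)
      _ = _ := by rw [log_mul hS.ne' (exp_pos _).ne', log_exp]; ring
  have hvd : v * bsD1 k v = v ^ 2 / 2 - k := by simpa using mul_bsD1 k hv.ne' 1 one_ne_zero
  calc _ ≤ v ^ 2 * (log S - bsD1 k v ^ 2 / 2) := mul_le_mul_of_nonneg_left hlog (sq_nonneg v)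
    _ = _ := by rw [← hvd]; ring

/-- Mean value bound on `[θ v, v]`, where the vega is smallest at the left end point. -/
lemma bsCallTotalVol_ge {S k v θ : ℝ} (hS : 0 < S) (hk : 0 < k) (hθ0 : 0 < θ) (hθ1 : θ ≤ 1)
    (hv : 0 < v) (hvk : v ^ 2 ≤ 2 * k) :
    S * gaussianPDFReal 0 1 (bsD1 k (θ * v)) * (v - θ * v) ≤ bsCallTotalVol S k v := by
  have hθv : 0 < θ * v := mul_pos hθ0 hv
  have hθv_le : θ * v ≤ v := mul_le_of_le_one_left hv.le hθ1
  have hderiv : ∀ s ∈ Icc (θ * v) v, HasDerivAt (bsCallTotalVol S k)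
      (S * gaussianPDFReal 0 1 (bsD1 k s)) s :=
    fun s hs => hasDerivAt_bsCallTotalVol S k (hθv.trans_le hs.1).ne'
  have hvega : ∀ s ∈ interior (Icc (θ * v) v),
      S * gaussianPDFReal 0 1 (bsD1 k (θ * v)) ≤ deriv (bsCallTotalVol S k) s := by
    intro s hs
    have hs' := interior_subset hs
    have hd1θs : bsD1 k (θ * v) ≤ bsD1 k s := bsD1_le_bsD1 hk.le hθv hs'.1
    have hd1s : bsD1 k s ≤ 0 := (bsD1_le_bsD1 hk.le (hθv.trans_le hs'.1) hs'.2).trans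
      (bsD1_nonpos hv hvk)
    rw [(hderiv s hs').deriv]
    gcongr
    exact gaussianPDFReal_zero_one_monotoneOn (hd1θs.trans hd1s) hd1s hd1θs
  have hgrowth := (convex_Icc (θ * v) v).mul_sub_le_image_sub_of_le_deriv
    (fun s hs => (hderiv s hs).continuousAt.continuousWithinAt)
    (fun s hs => (hderiv s (interior_subset hs)).differentiableAt.differentiableWithinAt)
    hvega (θ * v) ⟨le_rfl, hθv_le⟩ v ⟨hθv_le, le_rfl⟩ hθv_le
  linarith [bsCallTotalVol_pos hS hk hθv]

lemma sq_mul_log_bsCallTotalVol_ge {S k v θ : ℝ} (hS : 0 < S) (hk : 0 < k) (hθ0 : 0 < θ)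
    (hθ1 : θ < 1) (hv : 0 < v) (hvk : v ^ 2 ≤ 2 * k) :
    v ^ 2 * log (S * gaussianPDFReal 0 1 0 * (1 - θ)) + v ^ 2 * log v
      - (θ * v ^ 2 / 2 - k / θ) ^ 2 / 2 ≤ v ^ 2 * log (bsCallTotalVol S k v) := by
  set c := S * gaussianPDFReal 0 1 0 * (1 - θ)
  have hc : 0 < c := mul_pos (mul_pos hS (gaussianPDFReal_pos 0 1 0 one_ne_zero)) (by linarith)
  have hlog : log c + log v - bsD1 k (θ * v) ^ 2 / 2 ≤ log (bsCallTotalVol S k v) :=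
    calc _ = log (c * v * exp (-bsD1 k (θ * v) ^ 2 / 2)) := by
          rw [log_mul (by positivity) (exp_pos _).ne', log_mul hc.ne' hv.ne', log_exp]; ring
      _ ≤ _ := by
          refine log_le_log (by positivity)
            (le_of_eq_of_le ?_ (bsCallTotalVol_ge hS hk hθ0 hθ1.le hv hvk))
          rw [gaussianPDFReal_zero_one (bsD1 k (θ * v))]
          ring
  have hvd := mul_bsD1 k hv.ne' θ hθ0.ne'
  calc _ = v ^ 2 * (log c + log v - bsD1 k (θ * v) ^ 2 / 2) := by rw [← hvd]; ring
    _ ≤ _ := mul_le_mul_of_nonneg_left hlog (sq_nonneg v)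

lemma continuous_sq_mul_log : Continuous fun v : ℝ => v ^ 2 * log v :=
  (continuous_id.mul continuous_mul_log).congr fun v => by simp only [Pi.mul_apply, id]; ring

lemma tendsto_sq_mul_log_bsCallTotalVol {S k : ℝ} (hS : 0 < S) (hk : 0 < k) :
    Tendsto (fun v => v ^ 2 * log (bsCallTotalVol S k v)) (𝓝[>] 0) (𝓝 (-k ^ 2 / 2)) := by
  have hsmall : ∀ᶠ v in 𝓝[>] 0, 0 < v ∧ v ^ 2 ≤ 2 * k := by
    have hsq : Tendsto (fun v : ℝ => v ^ 2) (𝓝[>] 0) (𝓝 0) :=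
      ((continuous_pow 2).tendsto' 0 0 (by simp)).mono_left nhdsWithin_le_nhds
    have h2k : (0 : ℝ) < 2 * k := by linarith
    filter_upwards [self_mem_nhdsWithin, hsq.eventually (gt_mem_nhds h2k)]
      with v hv hvk using ⟨hv, hvk.le⟩
  refine tendsto_order.2 ⟨fun a ha => ?_, fun a ha => ?_⟩
  · obtain ⟨θ, haθ, hθ0, hθ1⟩ : ∃ θ, a < -(k / θ) ^ 2 / 2 ∧ 0 < θ ∧ θ < 1 := by
      have hθ : Tendsto (fun θ => -(k / θ) ^ 2 / 2) (𝓝[<] 1) (𝓝 (-k ^ 2 / 2)) := by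
        have : ContinuousAt (fun θ : ℝ => -(k / θ) ^ 2 / 2) 1 := by fun_prop (disch := norm_num)
        simpa using this.tendsto.mono_left nhdsWithin_le_nhds
      exact ((hθ.eventually (lt_mem_nhds ha)).and (Ioo_mem_nhdsLT zero_lt_one)).exists
    have hlower : Tendsto (fun v => v ^ 2 * log (S * gaussianPDFReal 0 1 0 * (1 - θ))
        + v ^ 2 * log v - (θ * v ^ 2 / 2 - k / θ) ^ 2 / 2) (𝓝[>] 0) (𝓝 (-(k / θ) ^ 2 / 2)) := by
      have hcont := continuous_sq_mul_log
      exact ((by fun_prop : Continuous _).tendsto' 0 _ (by simp [neg_div])).mono_left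
        nhdsWithin_le_nhds
    filter_upwards [hsmall, hlower.eventually (lt_mem_nhds haθ)] with v ⟨hv, hvk⟩ hav
    exact hav.trans_le (sq_mul_log_bsCallTotalVol_ge hS hk hθ0 hθ1 hv hvk)
  · have hupper : Tendsto (fun v => v ^ 2 * log S - (v ^ 2 / 2 - k) ^ 2 / 2) (𝓝[>] 0)
        (𝓝 (-k ^ 2 / 2)) :=
      ((by fun_prop : Continuous _).tendsto' 0 _ (by simp [neg_div])).mono_left nhdsWithin_le_nhds
    filter_upwards [hsmall, hupper.eventually (gt_mem_nhds ha)] with v ⟨hv, hvk⟩ hva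
    exact (sq_mul_log_bsCallTotalVol_le hS hk hv hvk).trans_lt hva

end BlackScholes

section PCLVG

variable {σ1 σ2 U K : ℝ}

lemma tendsto_exp_div_mul_nhdsGT_zero {a b : ℝ} (ha : a < 0) (hb : 0 < b) :
    Tendsto (fun τ => exp (a / (b * τ))) (𝓝[>] 0) (𝓝 0) := by
  have h : Tendsto (fun τ : ℝ => a / b * τ⁻¹) (𝓝[>] 0) atBot :=
    (tendsto_const_mul_atBot_of_neg (div_neg_of_neg_of_pos ha hb)).2 tendsto_inv_nhdsGT_zero
  exact (tendsto_exp_atBot.comp h).congr fun τ => by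
    rw [Function.comp_apply, div_mul_eq_div_div, div_eq_mul_inv (a / b)]

lemma pclvgD_pos (h1 : 0 < σ1) (h2 : 0 < σ2) (hU : 0 ≤ U) {τ : ℝ} (hτ : 0 ≤ τ) :
    0 < pclvgD σ1 σ2 U τ := by
  have he1 : exp (-2 * U / (σ1 * τ)) ≤ 1 :=
    exp_le_one_iff.2 (div_nonpos_of_nonpos_of_nonneg (by linarith) (by positivity))
  have he0 := exp_pos (-2 * U / (σ1 * τ))
  have hs1 : 0 < 1 / σ1 := by positivity
  have hs2 : 0 < 1 / σ2 := by positivity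
  rw [pclvgD]
  nlinarith

lemma pclvgCall_of_le (hUK : U ≤ K) (τ : ℝ) :
    pclvgCall σ1 σ2 U K τ = τ * exp (-(K - U) / (σ2 * τ)) * (1 - exp (-2 * U / (σ1 * τ))) /
      pclvgD σ1 σ2 U τ :=
  if_neg (not_lt.2 hUK)

lemma tendsto_pclvgD (h1 : 0 < σ1) (hU : 0 < U) :
    Tendsto (pclvgD σ1 σ2 U) (𝓝[>] 0) (𝓝 (1 / σ1 + 1 / σ2)) := by
  have h := ((tendsto_exp_div_mul_nhdsGT_zero (by linarith : -2 * U < 0) h1).const_mul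
    (1 / σ2 - 1 / σ1)).const_sub (1 / σ1 + 1 / σ2)
  rw [mul_zero, sub_zero] at h
  exact h

lemma tendsto_pclvgCall_zero (h1 : 0 < σ1) (h2 : 0 < σ2) (hU : 0 < U) (hUK : U < K) :
    Tendsto (pclvgCall σ1 σ2 U K) (𝓝[>] 0) (𝓝 0) := by
  have hτ : Tendsto (fun τ : ℝ => τ) (𝓝[>] 0) (𝓝 0) := tendsto_id.mono_left nhdsWithin_le_nhds
  have h := ((hτ.mul (tendsto_exp_div_mul_nhdsGT_zero (by linarith : -(K - U) < 0) h2)).mul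
    ((tendsto_exp_div_mul_nhdsGT_zero (by linarith : -2 * U < 0) h1).const_sub 1)).div
    (tendsto_pclvgD (σ2 := σ2) h1 hU) (by positivity)
  rw [zero_mul, zero_mul, zero_div] at h
  exact h.congr fun τ => (pclvgCall_of_le hUK.le τ).symm

lemma tendsto_mul_log_pclvgCall (h1 : 0 < σ1) (h2 : 0 < σ2) (hU : 0 < U) (hUK : U ≤ K) :
    Tendsto (fun τ => τ * log (pclvgCall σ1 σ2 U K τ)) (𝓝[>] 0) (𝓝 (-(K - U) / σ2)) := by
  have hτ : Tendsto (fun τ : ℝ => τ) (𝓝[>] 0) (𝓝 0) := tendsto_id.mono_left nhdsWithin_le_nhds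
  have hτlogτ : Tendsto (fun τ => τ * log τ) (𝓝[>] 0) (𝓝 0) :=
    (continuous_mul_log.tendsto' 0 0 (by simp)).mono_left nhdsWithin_le_nhds
  have hlogE : Tendsto (fun τ => log (1 - exp (-2 * U / (σ1 * τ)))) (𝓝[>] 0) (𝓝 (log (1 - 0))) :=
    (continuousAt_log (by norm_num)).tendsto.comp
      ((tendsto_exp_div_mul_nhdsGT_zero (by linarith : -2 * U < 0) h1).const_sub 1)
  have hlogD : Tendsto (fun τ => log (pclvgD σ1 σ2 U τ)) (𝓝[>] 0) (𝓝 (log (1 / σ1 + 1 / σ2))) :=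
    (continuousAt_log (by positivity)).tendsto.comp (tendsto_pclvgD h1 hU)
  have h := ((hτlogτ.add_const (-(K - U) / σ2)).add (hτ.mul hlogE)).sub (hτ.mul hlogD)
  rw [zero_add, zero_mul, zero_mul, add_zero, sub_zero] at h
  refine h.congr' ?_
  filter_upwards [self_mem_nhdsWithin] with τ (hτ : 0 < τ)
  have he : exp (-2 * U / (σ1 * τ)) < 1 :=
    exp_lt_one_iff.2 (div_neg_of_neg_of_pos (by linarith) (by positivity))
  rw [pclvgCall_of_le hUK, log_div (by positivity) (pclvgD_pos h1 h2 hU.le hτ.le).ne',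
    log_mul (by positivity) (by linarith), log_mul hτ.ne' (exp_pos _).ne', log_exp]
  field_simp

end PCLVG

lemma tendsto_nhdsGT_zero_of_monotoneOn {α : Type*} {l : Filter α} {f : α → ℝ} {g : ℝ → ℝ}
    (hg : MonotoneOn g (Ioi 0)) (hgpos : ∀ x, 0 < x → 0 < g x) (hf : ∀ᶠ a in l, 0 < f a)
    (hgf : Tendsto (fun a => g (f a)) l (𝓝 0)) : Tendsto f l (𝓝[>] 0) := by
  refine tendsto_nhdsWithin_iff.2
    ⟨tendsto_order.2 ⟨fun b hb => hf.mono fun a ha => hb.trans ha, fun b hb => ?_⟩, hf⟩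
  filter_upwards [hf, hgf.eventually (gt_mem_nhds (hgpos b hb))] with a ha hgfa
  by_contra! hba
  exact (hg hb ha hba).not_gt hgfa

lemma tendsto_sq_of_tendsto_mul_log {vol C : ℝ → ℝ} {A B : ℝ} (hB0 : B ≠ 0)
    (hA : Tendsto (fun τ => (vol τ * √τ) ^ 2 * log (C τ)) (𝓝[>] 0) (𝓝 A))
    (hB : Tendsto (fun τ => τ * log (C τ)) (𝓝[>] 0) (𝓝 B)) :
    Tendsto (fun τ => vol τ ^ 2) (𝓝[>] 0) (𝓝 (A / B)) := by
  refine (hA.div hB hB0).congr' ?_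
  filter_upwards [self_mem_nhdsWithin, hB.eventually_ne hB0] with τ (hτ : 0 < τ) hne
  have hlog : log (C τ) ≠ 0 := fun h => hne (by simp [h])
  rw [Pi.div_apply, mul_pow, sq_sqrt hτ.le]
  field_simp

/-- Short-maturity asymptotics of the PCLVG implied volatility for an
out-of-the-money call strike `K > U`:
`lim_{τ→0+} Σ(τ) = √σ₂ · log(K/U) / √(2(K−U))`. -/
theorem pclvg_implied_vol_short_term_OTM_call (U σ1 σ2 K : ℝ)
    (hU : 0 < U) (h1 : 0 < σ1) (h2 : 0 < σ2) (hK : U < K)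
    (IV : ℝ → ℝ) (hpos : ∀ τ : ℝ, 0 < τ → 0 < IV τ)
    (hiv : ∀ τ : ℝ, 0 < τ → bsCall U K τ (IV τ) = pclvgCall σ1 σ2 U K τ) :
    Filter.Tendsto IV (nhdsWithin 0 (Set.Ioi 0))
      (nhds (Real.sqrt σ2 * Real.log (K / U) / Real.sqrt (2 * (K - U)))) := by
  set k := log (K / U)
  have hk : 0 < k := log_pos ((one_lt_div hU).2 hK)
  have hv : ∀ τ, 0 < τ → 0 < IV τ * √τ := fun τ hτ => mul_pos (hpos τ hτ) (sqrt_pos.2 hτ)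
  have hcall : ∀ τ, 0 < τ → bsCallTotalVol U k (IV τ * √τ) = pclvgCall σ1 σ2 U K τ :=
    fun τ hτ => (bsCall_eq_bsCallTotalVol _ hU (hU.trans hK) hτ.le).symm.trans (hiv τ hτ)
  have hv0 : Tendsto (fun τ => IV τ * √τ) (𝓝[>] 0) (𝓝[>] 0) :=
    tendsto_nhdsGT_zero_of_monotoneOn (bsCallTotalVol_strictMonoOn hU k).monotoneOn
      (fun v hv => bsCallTotalVol_pos hU hk hv) (eventually_mem_nhdsWithin.mono hv)
      ((tendsto_pclvgCall_zero h1 h2 hU hK).congr'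
        (eventually_mem_nhdsWithin.mono fun τ hτ => (hcall τ hτ).symm))
  have hA : Tendsto (fun τ => (IV τ * √τ) ^ 2 * log (pclvgCall σ1 σ2 U K τ)) (𝓝[>] 0)
      (𝓝 (-k ^ 2 / 2)) :=
    ((tendsto_sq_mul_log_bsCallTotalVol hU hk).comp hv0).congr'
      (eventually_mem_nhdsWithin.mono fun τ hτ => by rw [Function.comp_apply, hcall τ hτ])
  have hIV2 := tendsto_sq_of_tendsto_mul_log (div_neg_of_neg_of_pos (by linarith) h2).ne hA
    (tendsto_mul_log_pclvgCall h1 h2 hU hK.le)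
  have hlim : √(-k ^ 2 / 2 / (-(K - U) / σ2)) = √σ2 * k / √(2 * (K - U)) := by
    rw [show -k ^ 2 / 2 / (-(K - U) / σ2) = σ2 * k ^ 2 / (2 * (K - U)) by field_simp,
      sqrt_div (by positivity), sqrt_mul h2.le, sqrt_sq hk.le]
  rw [← hlim]
  refine ((continuous_sqrt.tendsto _).comp hIV2).congr' ?_
  filter_upwards [self_mem_nhdsWithin] with τ hτ using sqrt_sq (hpos τ hτ).le
end

section
/- For any σ₁, σ₂ > 0, any barrier U > 0, any strike 0 < K ≤ U and any τ > 0, the series Σ_{n=0}^∞ [ C^σ(U, U + (U(2n+1) − K)·σ₂/σ₁, τ) − C^σ(U, U + (U(2n+1) + K)·σ₂/σ₁, τ) ] converges and its sum equals the PCLVG put price: P^σ(U,K,τ) = Σ_{n=0}^∞ [ C^σ(U, U + (U(2n+1) − K)·σ₂/σ₁, τ) − C^σ(U, U + (U(2n+1) + K)·σ₂/σ₁, τ) ]. (This is the exact static hedging identity expressing an out-of-the-money put price as an infinite portfolio of out-of-the-money call prices.) -/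
open MeasureTheory Filter Set

/-- Exact static hedging identity in a PCLVG model: for `0 < K ≤ U`,
the put price at the barrier equals the convergent series of call-price differences
`Σₙ [C^σ(U, U+(U(2n+1)−K)σ₂/σ₁, τ) − C^σ(U, U+(U(2n+1)+K)σ₂/σ₁, τ)]`. -/
theorem pclvg_exact_static_hedge (σ1 σ2 U K τ : ℝ)
    (h1 : 0 < σ1) (h2 : 0 < σ2) (hU : 0 < U) (hK : 0 < K) (hKU : K ≤ U) (hτ : 0 < τ) :
    HasSum
      (fun n : ℕ =>
        pclvgCall σ1 σ2 U (U + (U * (2 * (n : ℝ) + 1) - K) * σ2 / σ1) τ -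
        pclvgCall σ1 σ2 U (U + (U * (2 * (n : ℝ) + 1) + K) * σ2 / σ1) τ)
      (pclvgPut σ1 σ2 U K τ) := by

  have hσ1 : σ1 ≠ 0 := h1.ne'
  have hσ2 : σ2 ≠ 0 := h2.ne'
  have hτ' : τ ≠ 0 := hτ.ne'
  set q : ℝ := Real.exp (-2 * U / (σ1 * τ)) with hqdef
  have hq0 : 0 < q := Real.exp_pos _
  have hq1 : q < 1 := by
    rw [hqdef, Real.exp_lt_one_iff]
    apply div_neg_of_neg_of_pos
    · nlinarith
    · positivity
  have h1q : (1 : ℝ) - q ≠ 0 := by linarith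
  set C : ℝ := τ * (Real.exp (-(U - K) / (σ1 * τ)) - Real.exp (-(U + K) / (σ1 * τ))) *
      (1 - q) / pclvgD σ1 σ2 U τ with hCdef
  have hgeom : HasSum (fun n : ℕ => C * q ^ n) (C * (1 - q)⁻¹) :=
    (hasSum_geometric_of_lt_one hq0.le hq1).mul_left C
  have hfun : (fun n : ℕ =>
        pclvgCall σ1 σ2 U (U + (U * (2 * (n : ℝ) + 1) - K) * σ2 / σ1) τ -
        pclvgCall σ1 σ2 U (U + (U * (2 * (n : ℝ) + 1) + K) * σ2 / σ1) τ)
      = fun n : ℕ => C * q ^ n := by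
    funext n
    have hn0 : (0 : ℝ) ≤ (n : ℝ) := Nat.cast_nonneg n
    have hge1 : 0 ≤ (U * (2 * (n : ℝ) + 1) - K) * σ2 / σ1 := by
      apply div_nonneg _ h1.le
      apply mul_nonneg _ h2.le
      nlinarith
    have hge2 : 0 ≤ (U * (2 * (n : ℝ) + 1) + K) * σ2 / σ1 := by
      apply div_nonneg _ h1.le
      apply mul_nonneg _ h2.le
      nlinarith
    have hK1 : ¬ (U + (U * (2 * (n : ℝ) + 1) - K) * σ2 / σ1 < U) := by
      push_neg; linarith
    have hK2 : ¬ (U + (U * (2 * (n : ℝ) + 1) + K) * σ2 / σ1 < U) := by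
      push_neg; linarith
    rw [pclvgCall, if_neg hK1, pclvgCall, if_neg hK2]
    have E1 : Real.exp (-(U + (U * (2 * (n : ℝ) + 1) - K) * σ2 / σ1 - U) / (σ2 * τ))
        = Real.exp (-(U - K) / (σ1 * τ)) * q ^ n := by
      rw [hqdef, ← Real.exp_nat_mul, ← Real.exp_add]
      congr 1
      field_simp
      ring
    have E2 : Real.exp (-(U + (U * (2 * (n : ℝ) + 1) + K) * σ2 / σ1 - U) / (σ2 * τ))
        = Real.exp (-(U + K) / (σ1 * τ)) * q ^ n := by
      rw [hqdef, ← Real.exp_nat_mul, ← Real.exp_add]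
      congr 1
      field_simp
      ring
    rw [E1, E2, hCdef, hqdef]
    ring
  have hput : pclvgPut σ1 σ2 U K τ = C * (1 - q)⁻¹ := by
    have hC' : C * (1 - q)⁻¹ = τ * (Real.exp (-(U - K) / (σ1 * τ)) -
        Real.exp (-(U + K) / (σ1 * τ))) / pclvgD σ1 σ2 U τ := by
      rw [hCdef, div_mul_eq_mul_div, mul_assoc, mul_inv_cancel₀ h1q, mul_one]
    rw [hC', pclvgPut, pclvgCall]
    by_cases hlt : K < U
    · rw [if_pos hlt]
      have : Real.exp (-(U - K) / (σ1 * τ)) * Real.exp (-2 * K / (σ1 * τ))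
          = Real.exp (-(U + K) / (σ1 * τ)) := by
        rw [← Real.exp_add]; congr 1; field_simp; ring
      rw [← this]; ring
    · have hKU' : K = U := le_antisymm hKU (not_lt.mp hlt)
      rw [if_neg hlt, hKU']
      have e0 : -(U - U) / (σ2 * τ) = 0 := by ring_nf
      have e0' : -(U - U) / (σ1 * τ) = 0 := by ring_nf
      rw [e0, e0', Real.exp_zero]
      have : -2 * U / (σ1 * τ) = -(U + U) / (σ1 * τ) := by ring
      rw [this]
      ring
  rw [hfun, hput]
  exact hgeom
end

section
/- Let σ₁, σ₂ > 0, U > 0 and 0 < K ≤ U, and let 𝐊 = U + (U − K)·σ₂/σ₁. Then for every x ∈ ℝ, (K/U)·(x − 𝐊)^+ ≤ g(x) ≤ (x − 𝐊)^+, where g is the static-hedge payoff function defined below. -/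
open MeasureTheory Filter Set

/-- The static-hedge payoff function `g` from the weak reflection principle: for each fixed `x`
only finitely many summands are nonzero, so the `tsum` is well defined. -/
noncomputable def gFun (σ1 σ2 U K x : ℝ) : ℝ :=
  ∑' n : ℕ,
    (max (x - U - (U * (2 * (n : ℝ) + 1) - K) * σ2 / σ1) 0 -
     max (x - U - (U * (2 * (n : ℝ) + 1) + K) * σ2 / σ1) 0)

lemma gFun_key_ineq (s K U c : ℝ) (hK : 0 < K) (hKU : K ≤ U) (hc : 0 < c) :
    K / U * (max s 0 - max (s - 2 * U * c) 0) ≤ max s 0 - max (s - 2 * K * c) 0 := by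
  have hU : 0 < U := lt_of_lt_of_le hK hKU
  have hKU' : K / U ≤ 1 := (div_le_one hU).mpr hKU
  have hKUpos : 0 < K / U := div_pos hK hU
  have hKc : 0 ≤ 2 * K * c := by positivity
  have hUc : 2 * K * c ≤ 2 * U * c := by nlinarith
  rcases le_total s 0 with h | h
  · rw [max_eq_right h, max_eq_right (by linarith : s - 2 * U * c ≤ 0),
      max_eq_right (by linarith : s - 2 * K * c ≤ 0)]
    simp
  rcases le_total s (2 * K * c) with h2 | h2
  · rw [max_eq_left h, max_eq_right (by linarith : s - 2 * U * c ≤ 0),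
      max_eq_right (by linarith : s - 2 * K * c ≤ 0)]
    nlinarith
  rcases le_total s (2 * U * c) with h3 | h3
  · rw [max_eq_left h, max_eq_right (by linarith : s - 2 * U * c ≤ 0),
      max_eq_left (by linarith : (0:ℝ) ≤ s - 2 * K * c)]
    have e : K / U * (2 * U * c) = 2 * K * c := by field_simp
    nlinarith
  · rw [max_eq_left h, max_eq_left (by linarith : (0:ℝ) ≤ s - 2 * U * c),
      max_eq_left (by linarith : (0:ℝ) ≤ s - 2 * K * c)]
    have e : K / U * (s - (s - 2 * U * c)) = 2 * K * c := by field_simp; ring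
    linarith

/-- Convex bounds on the static-hedge payoff: with `𝐊 = U + (U−K)σ₂/σ₁`,
for all `x`, `(K/U)(x−𝐊)⁺ ≤ g(x) ≤ (x−𝐊)⁺`. -/
theorem gFun_convex_bounds (σ1 σ2 U K : ℝ)
    (h1 : 0 < σ1) (h2 : 0 < σ2) (hU : 0 < U) (hK : 0 < K) (hKU : K ≤ U) :
    ∀ x : ℝ,
      K / U * max (x - (U + (U - K) * σ2 / σ1)) 0 ≤ gFun σ1 σ2 U K x ∧
      gFun σ1 σ2 U K x ≤ max (x - (U + (U - K) * σ2 / σ1)) 0 := by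
  intro x
  set c : ℝ := σ2 / σ1 with hcdef
  have hc : 0 < c := div_pos h2 h1
  have hKUpos : 0 < K / U := div_pos hK (hK.trans_le hKU)
  -- P n = (x - A n)⁺, Q n = (x - B n)⁺
  set P : ℕ → ℝ := fun n => max (x - U - (U * (2 * (n : ℝ) + 1) - K) * σ2 / σ1) 0 with hP
  set Q : ℕ → ℝ := fun n => max (x - U - (U * (2 * (n : ℝ) + 1) + K) * σ2 / σ1) 0 with hQ
  have hgf : gFun σ1 σ2 U K x = ∑' n, (P n - Q n) := rfl
  have harg : ∀ a : ℝ, a * σ2 / σ1 = a * c := fun a => by rw [hcdef]; ring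
  -- key per-term inequalities
  have hterm : ∀ n : ℕ, K / U * (P n - P (n + 1)) ≤ P n - Q n := by
    intro n
    have e1 : x - U - (U * (2 * (n : ℝ) + 1) + K) * σ2 / σ1
        = (x - U - (U * (2 * (n : ℝ) + 1) - K) * σ2 / σ1) - 2 * K * c := by
      rw [harg, harg]; ring
    have e2 : x - U - (U * (2 * ((n : ℕ) + 1 : ℕ) + 1 : ℝ) - K) * σ2 / σ1
        = (x - U - (U * (2 * (n : ℝ) + 1) - K) * σ2 / σ1) - 2 * U * c := by
      push_cast
      rw [harg, harg]; ring
    have := gFun_key_ineq (x - U - (U * (2 * (n : ℝ) + 1) - K) * σ2 / σ1) K U c hK hKU hc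
    simp only [hP, hQ]
    rw [e1]
    push_cast
    rw [show (U * (2 * ((n:ℝ) + 1) + 1) - K) * σ2 / σ1
        = (U * (2 * (n : ℝ) + 1) - K) * σ2 / σ1 + 2 * U * c by rw [harg, harg]; ring]
    convert this using 3
    ring
  have htermU : ∀ n : ℕ, P n - Q n ≤ P n - P (n + 1) := by
    intro n
    have : P (n + 1) ≤ Q n := by
      simp only [hP, hQ]
      apply max_le_max _ le_rfl
      push_cast
      rw [harg, harg]
      nlinarith [mul_nonneg (sub_nonneg.mpr hKU) hc.le]
    linarith
  have hQPle : ∀ n : ℕ, Q n ≤ P n := by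
    intro n
    simp only [hP, hQ]
    apply max_le_max _ le_rfl
    rw [harg, harg]
    nlinarith [mul_nonneg hK.le hc.le]
  -- choose N with x ≤ A n for all n ≥ N
  obtain ⟨N, hN⟩ := exists_nat_ge (x / (2 * U * c))
  have hx2UcN : x ≤ 2 * U * c * N := by
    rw [div_le_iff₀ (by positivity)] at hN
    linarith
  have hPzero : ∀ n : ℕ, N ≤ n → P n = 0 := by
    intro n hn
    apply max_eq_right
    rw [harg]
    have hn' : (N : ℝ) ≤ (n : ℝ) := by exact_mod_cast hn
    have h2 : 2 * U * c * (N:ℝ) ≤ 2 * U * c * (n:ℝ) := mul_le_mul_of_nonneg_left hn' (by positivity)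
    nlinarith [mul_nonneg (sub_nonneg.mpr hKU) hc.le]
  have hfzero : ∀ n : ℕ, n ∉ Finset.range N → P n - Q n = 0 := by
    intro n hn
    rw [Finset.mem_range, not_lt] at hn
    have h1' := hPzero n hn
    have h2' := hQPle n
    have h3' : 0 ≤ Q n := le_max_right _ _
    linarith
  have hsum : gFun σ1 σ2 U K x = ∑ n ∈ Finset.range N, (P n - Q n) :=
    hgf.trans (tsum_eq_sum hfzero)
  have hPN : P N = 0 := hPzero N le_rfl
  have htel : ∑ n ∈ Finset.range N, (P n - P (n + 1)) = P 0 - P N :=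
    Finset.sum_range_sub' P N
  have hP0 : P 0 = max (x - (U + (U - K) * σ2 / σ1)) 0 := by
    simp only [hP]
    norm_num
    congr 1
    ring
  constructor
  · rw [hsum, hP0.symm]
    calc K / U * P 0 = K / U * ∑ n ∈ Finset.range N, (P n - P (n + 1)) := by
          rw [htel, hPN]; ring
      _ = ∑ n ∈ Finset.range N, K / U * (P n - P (n + 1)) := Finset.mul_sum _ _ _
      _ ≤ ∑ n ∈ Finset.range N, (P n - Q n) := Finset.sum_le_sum fun n _ => hterm n
  · rw [hsum, hP0.symm]
    calc ∑ n ∈ Finset.range N, (P n - Q n)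
        ≤ ∑ n ∈ Finset.range N, (P n - P (n + 1)) := Finset.sum_le_sum fun n _ => htermU n
      _ = P 0 := by rw [htel, hPN]; ring
end

section
/- Let σ₁, σ₂ > 0, U > 0 and 0 < K ≤ U, let 𝐊 = U + (U − K)·σ₂/σ₁, and let g̲(x) = (K/U)·(x − 𝐊)^+. Then g̲ is convex on ℝ, g̲(x) ≤ g(x) for all x ∈ ℝ, and g̲ is the largest convex minorant of g: every convex function h : ℝ → ℝ with h(x) ≤ g(x) for all x satisfies h(x) ≤ g̲(x) for all x. -/
open MeasureTheory Filter Set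

/-!
With `c = σ₂/σ₁`, `g` is a sum of ramps, each rising by `w = 2Kc` over `[aₙ, aₙ + w]`, at the
nodes `aₙ = 𝐊 + n p` with period `p = 2Uc`. Since `w ≤ p`, each ramp dominates `w/p` times the
ramp of width `p` at the same node, and the latter telescope to `(x - 𝐊)⁺`; this gives `g̲ ≤ g`.
Conversely `g` vanishes left of `𝐊` and `g(aₙ) = n w = g̲(aₙ)`, so a convex minorant of `g` lies
below `g̲` on `(-∞, 𝐊]` and below each chord of `g̲` between consecutive nodes, where `g̲` is affine.
-/

theorem ConvexOn.le_of_le_affine_of_mem_Icc {a b x m q : ℝ} {h : ℝ → ℝ}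
    (hh : ConvexOn ℝ (Icc a b) h) (ha : h a ≤ m * a + q) (hb : h b ≤ m * b + q)
    (hx : x ∈ Icc a b) : h x ≤ m * x + q := by
  have hab : a ≤ b := hx.1.trans hx.2
  have hℓ : ConcaveOn ℝ (Icc a b) fun y => m * y + q :=
    ((LinearMap.mul ℝ ℝ m).concaveOn (convex_Icc a b)).add_const q
  have := (hh.sub hℓ).le_on_segment (left_mem_Icc.2 hab) (right_mem_Icc.2 hab)
    (by rwa [segment_eq_Icc hab])
  simp only [Pi.sub_apply, le_max_iff] at this
  rcases this with h' | h' <;> linarith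

theorem convexOn_const_mul_posPart_sub {s : ℝ} (hs : 0 ≤ s) (a : ℝ) :
    ConvexOn ℝ univ fun x : ℝ => s * max (x - a) 0 := by
  simpa [sub_eq_add_neg] using
    (((convexOn_id convex_univ).add_const (-a)).sup (convexOn_const 0 convex_univ)).smul hs

/-- The truncation of `t` to the interval `[0, w]`. -/
noncomputable def ramp (w t : ℝ) : ℝ := max t 0 - max (t - w) 0

theorem ramp_eq_zero {w t : ℝ} (hw : 0 ≤ w) (ht : t ≤ 0) : ramp w t = 0 := by
  simp [ramp, max_eq_right ht, max_eq_right (by linarith : t - w ≤ 0)]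

theorem ramp_eq_self_of_le {w t : ℝ} (hw : 0 ≤ w) (ht : w ≤ t) : ramp w t = w := by
  rw [ramp, max_eq_left (by linarith), max_eq_left (by linarith)]; ring

theorem div_mul_ramp_le_ramp {p w : ℝ} (hp : 0 < p) (hw : 0 ≤ w) (hwp : w ≤ p) (t : ℝ) :
    w / p * ramp p t ≤ ramp w t := by
  rw [div_mul_eq_mul_div, div_le_iff₀ hp]
  simp only [ramp, max_def]
  split_ifs <;> nlinarith

noncomputable def rampSum (a₀ p w x : ℝ) : ℝ := ∑' n : ℕ, ramp w (x - (a₀ + n * p))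

section RampSum

variable {a₀ p w : ℝ}

theorem exists_le_add_nat_mul (hp : 0 < p) (a₀ x : ℝ) : ∃ N : ℕ, x ≤ a₀ + N * p := by
  obtain ⟨N, hN⟩ := exists_nat_ge ((x - a₀) / p)
  exact ⟨N, by rw [div_le_iff₀ hp] at hN; linarith⟩

theorem rampSum_eq_sum (hp : 0 < p) (hw : 0 ≤ w) {x : ℝ} {N : ℕ} (hN : x ≤ a₀ + N * p) :
    rampSum a₀ p w x = ∑ n ∈ Finset.range N, ramp w (x - (a₀ + n * p)) := by
  refine tsum_eq_sum fun n hn => ramp_eq_zero hw ?_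
  have : (N : ℝ) ≤ n := by exact_mod_cast not_lt.1 (Finset.mem_range.not.1 hn)
  nlinarith

theorem rampSum_eq_zero (hp : 0 < p) (hw : 0 ≤ w) {x : ℝ} (hx : x ≤ a₀) :
    rampSum a₀ p w x = 0 := by
  simp [rampSum_eq_sum (N := 0) hp hw (by simpa using hx)]

theorem rampSum_add_nat_mul (hp : 0 < p) (hw : 0 ≤ w) (hwp : w ≤ p) (n : ℕ) :
    rampSum a₀ p w (a₀ + n * p) = n * w := by
  rw [rampSum_eq_sum hp hw le_rfl, Finset.sum_congr rfl fun k hk => ramp_eq_self_of_le hw ?_]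
  · simp
  have : (k : ℝ) + 1 ≤ n := by exact_mod_cast Finset.mem_range.1 hk
  nlinarith

theorem div_mul_posPart_le_rampSum (hp : 0 < p) (hw : 0 ≤ w) (hwp : w ≤ p) (x : ℝ) :
    w / p * max (x - a₀) 0 ≤ rampSum a₀ p w x := by
  obtain ⟨N, hN⟩ := exists_le_add_nat_mul hp a₀ x
  have htelescope : ∑ n ∈ Finset.range N, ramp p (x - (a₀ + n * p)) = max (x - a₀) 0 := by
    have := Finset.sum_range_sub' (fun n : ℕ => max (x - (a₀ + n * p)) 0) N
    simp only [Nat.cast_add, Nat.cast_one, Nat.cast_zero, zero_mul, add_zero,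
      max_eq_right (sub_nonpos.2 hN), sub_zero] at this
    rw [← this]
    refine Finset.sum_congr rfl fun n _ => ?_
    rw [ramp]; ring_nf
  rw [rampSum_eq_sum hp hw hN, ← htelescope, Finset.mul_sum]
  exact Finset.sum_le_sum fun n _ => div_mul_ramp_le_ramp hp hw hwp _

theorem le_div_mul_posPart_of_convexOn_of_le_rampSum (hp : 0 < p) (hw : 0 ≤ w) (hwp : w ≤ p)
    {h : ℝ → ℝ} (hh : ConvexOn ℝ univ h) (hle : ∀ x, h x ≤ rampSum a₀ p w x) (x : ℝ) :
    h x ≤ w / p * max (x - a₀) 0 := by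
  rcases le_or_gt x a₀ with hx | hx
  · simpa [max_eq_right (sub_nonpos.2 hx), rampSum_eq_zero hp hw hx] using hle x
  set n := ⌊(x - a₀) / p⌋₊
  have hn : (n : ℝ) ≤ (x - a₀) / p := Nat.floor_le (div_nonneg (sub_nonneg.2 hx.le) hp.le)
  have hn' : (x - a₀) / p < n + 1 := Nat.lt_floor_add_one _
  rw [le_div_iff₀ hp] at hn
  rw [div_lt_iff₀ hp] at hn'
  have hnode : ∀ k : ℕ, h (a₀ + k * p) ≤ w / p * (a₀ + k * p) + -(w / p * a₀) := fun k => by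
    have hline : w / p * (a₀ + k * p) + -(w / p * a₀) = k * w := by field_simp; ring
    rw [hline, ← rampSum_add_nat_mul hp hw hwp]
    exact hle _
  have := (hh.subset (subset_univ _) (convex_Icc _ _)).le_of_le_affine_of_mem_Icc (hnode n)
    (by simpa using hnode (n + 1)) (x := x) ⟨by linarith, by linarith⟩
  rw [max_eq_left (sub_nonneg.2 hx.le)]
  linarith

end RampSum

theorem gFun_eq_rampSum (σ1 σ2 U K x : ℝ) :
    gFun σ1 σ2 U K x =
      rampSum (U + (U - K) * σ2 / σ1) (2 * U * (σ2 / σ1)) (2 * K * (σ2 / σ1)) x := by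
  refine tsum_congr fun n => ?_
  rw [ramp]
  ring_nf

/-- `g̲(x) = (K/U)(x−𝐊)⁺` is the largest convex minorant of `g`. -/
theorem gFun_largest_convex_minorant (σ1 σ2 U K : ℝ)
    (h1 : 0 < σ1) (h2 : 0 < σ2) (hU : 0 < U) (hK : 0 < K) (hKU : K ≤ U) :
    ConvexOn ℝ Set.univ (fun x : ℝ => K / U * max (x - (U + (U - K) * σ2 / σ1)) 0) ∧
    (∀ x : ℝ, K / U * max (x - (U + (U - K) * σ2 / σ1)) 0 ≤ gFun σ1 σ2 U K x) ∧
    (∀ h : ℝ → ℝ, ConvexOn ℝ Set.univ h → (∀ x : ℝ, h x ≤ gFun σ1 σ2 U K x) →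
      ∀ x : ℝ, h x ≤ K / U * max (x - (U + (U - K) * σ2 / σ1)) 0) := by
  have hc : 0 < σ2 / σ1 := div_pos h2 h1
  have hp : 0 < 2 * U * (σ2 / σ1) := by positivity
  have hw : 0 ≤ 2 * K * (σ2 / σ1) := by positivity
  have hwp : 2 * K * (σ2 / σ1) ≤ 2 * U * (σ2 / σ1) := by gcongr
  have hslope : K / U = 2 * K * (σ2 / σ1) / (2 * U * (σ2 / σ1)) := by field_simp
  simp only [gFun_eq_rampSum, hslope]
  exact ⟨convexOn_const_mul_posPart_sub (div_nonneg hw hp.le) _,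
    div_mul_posPart_le_rampSum hp hw hwp,
    fun h hh hle => le_div_mul_posPart_of_convexOn_of_le_rampSum hp hw hwp hh hle⟩
end

section
/- Let σ₁, σ₂ > 0, U > 0 and 0 < K ≤ U, let 𝐊 = U + (U − K)·σ₂/σ₁, and let g̅(x) = (x − 𝐊)^+. Then g̅ is convex on ℝ, g(x) ≤ g̅(x) for all x ∈ ℝ, and g̅ is a minimal convex majorant of g: every convex function h : ℝ → ℝ with g(x) ≤ h(x) ≤ g̅(x) for all x satisfies h(x) = g̅(x) for all x. -/
open MeasureTheory Filter Set

/-!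
Each summand of `g` is a call spread `(x - aₙ)⁺ - (x - bₙ)⁺` with strikes
`a₀ = 𝐊 ≤ b₀ ≤ a₁ ≤ b₁ ≤ ⋯`, so the partial sums telescope below `(x - 𝐊)⁺`, with equality as
long as `x ≤ b₀`. A convex `h` squeezed between `g` and `g̅` therefore agrees with `g̅` on
`(-∞, b₀]`, where `g̅` already has slope `1` past `𝐊 < b₀`; convexity forces `h(x) ≥ x - 𝐊` to the
right of `b₀`.
-/

open Finset

noncomputable def callSpread (a b x : ℝ) : ℝ := max (x - a) 0 - max (x - b) 0

lemma callSpread_nonneg {a b : ℝ} (hab : a ≤ b) (x : ℝ) : 0 ≤ callSpread a b x :=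
  sub_nonneg.2 (max_le_max (by linarith) le_rfl)

lemma callSpread_eq_of_le {a b x : ℝ} (hx : x ≤ b) : callSpread a b x = max (x - a) 0 := by
  rw [callSpread, max_eq_right (a := x - b) (by linarith), sub_zero]

section Telescoping

variable {a b : ℕ → ℝ}

lemma sum_range_callSpread_le (hba : ∀ n, b n ≤ a (n + 1)) (x : ℝ) (N : ℕ) :
    ∑ n ∈ range N, callSpread (a n) (b n) x ≤ max (x - a 0) 0 := by
  have hstep (n : ℕ) : callSpread (a n) (b n) x ≤ max (x - a n) 0 - max (x - a (n + 1)) 0 :=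
    sub_le_sub_left (max_le_max (by linarith [hba n]) le_rfl) _
  calc ∑ n ∈ range N, callSpread (a n) (b n) x
      ≤ ∑ n ∈ range N, (max (x - a n) 0 - max (x - a (n + 1)) 0) := sum_le_sum fun n _ => hstep n
    _ = max (x - a 0) 0 - max (x - a N) 0 := sum_range_sub' (fun n => max (x - a n) 0) N
    _ ≤ max (x - a 0) 0 := sub_le_self _ (le_max_right _ _)

lemma tsum_callSpread_le (hab : ∀ n, a n ≤ b n) (hba : ∀ n, b n ≤ a (n + 1)) (x : ℝ) :
    ∑' n, callSpread (a n) (b n) x ≤ max (x - a 0) 0 :=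
  Real.tsum_le_of_sum_range_le (fun n => callSpread_nonneg (hab n) x)
    (sum_range_callSpread_le hba x)

lemma tsum_callSpread_eq_of_le (hab : ∀ n, a n ≤ b n) (hba : ∀ n, b n ≤ a (n + 1)) {x : ℝ}
    (hx : x ≤ b 0) :
    ∑' n, callSpread (a n) (b n) x = max (x - a 0) 0 := by
  refine le_antisymm (tsum_callSpread_le hab hba x) ?_
  have hsum : Summable fun n => callSpread (a n) (b n) x :=
    summable_of_sum_range_le (fun n => callSpread_nonneg (hab n) x)
      (sum_range_callSpread_le hba x)
  rw [← callSpread_eq_of_le hx]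
  exact hsum.le_tsum 0 fun n _ => callSpread_nonneg (hab n) x

end Telescoping

lemma eq_max_sub_of_convexOn {h : ℝ → ℝ} {c d : ℝ} (hcd : c < d) (hconv : ConvexOn ℝ Set.univ h)
    (hle : ∀ x, h x ≤ max (x - c) 0) (heq : ∀ x ≤ d, h x = max (x - c) 0) (x : ℝ) :
    h x = max (x - c) 0 := by
  rcases le_or_gt x d with hxd | hdx
  · exact heq x hxd
  have hc : h c = 0 := by rw [heq c hcd.le, sub_self, max_self]
  have hd : h d = d - c := by rw [heq d le_rfl, max_eq_left (by linarith)]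
  have hslope := hconv.slope_mono_adjacent (Set.mem_univ c) (Set.mem_univ x) hcd hdx
  rw [hc, hd, sub_zero, div_self (by linarith), le_div_iff₀ (by linarith)] at hslope
  have hupper := hle x
  rw [max_eq_left (by linarith)] at hupper ⊢
  linarith

lemma convexOn_max_sub (c : ℝ) : ConvexOn ℝ Set.univ fun x : ℝ => max (x - c) 0 :=
  ((convexOn_id convex_univ).sub (concaveOn_const c convex_univ)).sup
    (convexOn_const 0 convex_univ)

section Knots

variable {σ1 σ2 U K : ℝ}

lemma gFun_eq_tsum_callSpread (x : ℝ) :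
    gFun σ1 σ2 U K x = ∑' n : ℕ,
      callSpread (U + (U * (2 * n + 1) - K) * σ2 / σ1) (U + (U * (2 * n + 1) + K) * σ2 / σ1) x := by
  simp only [gFun, callSpread, sub_sub]

lemma gFun_knots_le (h1 : 0 < σ1) (h2 : 0 < σ2) (hK : 0 ≤ K) (n : ℕ) :
    U + (U * (2 * n + 1) - K) * σ2 / σ1 ≤ U + (U * (2 * n + 1) + K) * σ2 / σ1 := by
  gcongr
  linarith

lemma gFun_knots_le_succ (h1 : 0 < σ1) (h2 : 0 < σ2) (hKU : K ≤ U) (n : ℕ) :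
    U + (U * (2 * n + 1) + K) * σ2 / σ1 ≤ U + (U * (2 * ((n + 1 : ℕ) : ℝ) + 1) - K) * σ2 / σ1 := by
  gcongr
  push_cast
  linarith

end Knots

theorem gFun_minimal_convex_majorant_general (σ1 σ2 U K : ℝ)
    (h1 : 0 < σ1) (h2 : 0 < σ2) (hK : 0 < K) (hKU : K ≤ U) :
    ConvexOn ℝ Set.univ (fun x : ℝ => max (x - (U + (U - K) * σ2 / σ1)) 0) ∧
    (∀ x : ℝ, gFun σ1 σ2 U K x ≤ max (x - (U + (U - K) * σ2 / σ1)) 0) ∧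
    (∀ h : ℝ → ℝ, ConvexOn ℝ Set.univ h →
      (∀ x : ℝ, gFun σ1 σ2 U K x ≤ h x) →
      (∀ x : ℝ, h x ≤ max (x - (U + (U - K) * σ2 / σ1)) 0) →
      ∀ x : ℝ, h x = max (x - (U + (U - K) * σ2 / σ1)) 0) := by
  have hab := gFun_knots_le (U := U) h1 h2 hK.le
  have hba := gFun_knots_le_succ (U := U) h1 h2 hKU
  have ha0 : U + (U * (2 * ((0 : ℕ) : ℝ) + 1) - K) * σ2 / σ1 = U + (U - K) * σ2 / σ1 := by
    push_cast; ring
  have hlt : U + (U - K) * σ2 / σ1 < U + (U + K) * σ2 / σ1 := by gcongr; linarith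
  refine ⟨convexOn_max_sub _, fun x => ?_, fun h hconv hgh hhg => ?_⟩
  · rw [gFun_eq_tsum_callSpread, ← ha0]
    exact tsum_callSpread_le hab hba x
  · refine eq_max_sub_of_convexOn hlt hconv hhg fun x hx => le_antisymm (hhg x) ?_
    have hx0 : x ≤ U + (U * (2 * ((0 : ℕ) : ℝ) + 1) + K) * σ2 / σ1 :=
      hx.trans_eq (by push_cast; ring)
    rw [← ha0, ← tsum_callSpread_eq_of_le hab hba hx0, ← gFun_eq_tsum_callSpread]
    exact hgh x

/-- `g̅(x) = (x−𝐊)⁺` is a minimal convex majorant of `g`: any convex function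
squeezed between `g` and `g̅` equals `g̅`. -/
theorem gFun_minimal_convex_majorant (σ1 σ2 U K : ℝ)
    (h1 : 0 < σ1) (h2 : 0 < σ2) (hU : 0 < U) (hK : 0 < K) (hKU : K ≤ U) :
    ConvexOn ℝ Set.univ (fun x : ℝ => max (x - (U + (U - K) * σ2 / σ1)) 0) ∧
    (∀ x : ℝ, gFun σ1 σ2 U K x ≤ max (x - (U + (U - K) * σ2 / σ1)) 0) ∧
    (∀ h : ℝ → ℝ, ConvexOn ℝ Set.univ h →
      (∀ x : ℝ, gFun σ1 σ2 U K x ≤ h x) →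
      (∀ x : ℝ, h x ≤ max (x - (U + (U - K) * σ2 / σ1)) 0) →
      ∀ x : ℝ, h x = max (x - (U + (U - K) * σ2 / σ1)) 0) :=
  gFun_minimal_convex_majorant_general σ1 σ2 U K h1 h2 hK hKU
end

section
/- Let σ₁, σ₂, U > 0 and c > 0. Then for every K > 0 and τ > 0, the PCLVG call price satisfies the scaling identity C^{(c²σ₁, c²σ₂)}(U,K,τ) = C^{(σ₁,σ₂)}(U,K,c²τ). Consequently, if s > 0 satisfies C^bs(U,K,τ,s) = C^{(c²σ₁,c²σ₂)}(U,K,τ), then C^bs(U,K,c²τ,s/c) = C^{(σ₁,σ₂)}(U,K,c²τ); i.e., the PCLVG implied volatility scales as Σ^{c²σ}(U,K,τ) = c·Σ^{σ}(U,K,c²τ). -/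
open MeasureTheory Filter Set

/-- Scaling of the PCLVG call price and the induced scaling of the PCLVG
implied volatility: `C^{c²σ}(U,K,τ) = C^{σ}(U,K,c²τ)`, and an implied volatility `s` for the
scaled model at maturity `τ` yields the implied volatility `s/c` for the original model at
maturity `c²τ`. -/
theorem pclvg_scaling (σ1 σ2 U c : ℝ)
    (h1 : 0 < σ1) (h2 : 0 < σ2) (hU : 0 < U) (hc : 0 < c) :
    (∀ K τ : ℝ, 0 < K → 0 < τ →
      pclvgCall (c ^ 2 * σ1) (c ^ 2 * σ2) U K τ = pclvgCall σ1 σ2 U K (c ^ 2 * τ)) ∧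
    (∀ K τ s : ℝ, 0 < K → 0 < τ → 0 < s →
      bsCall U K τ s = pclvgCall (c ^ 2 * σ1) (c ^ 2 * σ2) U K τ →
      bsCall U K (c ^ 2 * τ) (s / c) = pclvgCall σ1 σ2 U K (c ^ 2 * τ)) := by
  have hc2 : (0:ℝ) < c ^ 2 := by positivity
  have key : ∀ K τ : ℝ, 0 < K → 0 < τ →
      pclvgCall (c ^ 2 * σ1) (c ^ 2 * σ2) U K τ = pclvgCall σ1 σ2 U K (c ^ 2 * τ) := by
    intro K τ hK hτ
    have e1 : c ^ 2 * σ1 * τ = σ1 * (c ^ 2 * τ) := by ring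
    have e2 : c ^ 2 * σ2 * τ = σ2 * (c ^ 2 * τ) := by ring
    have hD : pclvgD (c ^ 2 * σ1) (c ^ 2 * σ2) U τ
        = (c ^ 2)⁻¹ * pclvgD σ1 σ2 U (c ^ 2 * τ) := by
      unfold pclvgD
      rw [e1]
      field_simp
    unfold pclvgCall
    rw [hD, e1, e2]
    split <;> · field_simp
  refine ⟨key, ?_⟩
  intro K τ s hK hτ hs h
  have hbs : bsCall U K (c ^ 2 * τ) (s / c) = bsCall U K τ s := by
    unfold bsCall
    have hsqrt : Real.sqrt (c ^ 2 * τ) = c * Real.sqrt τ := by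
      rw [Real.sqrt_mul (by positivity), Real.sqrt_sq hc.le]
    rw [hsqrt]
    have h1' : s / c * (c * Real.sqrt τ) = s * Real.sqrt τ := by
      field_simp
    have h2' : (s / c) ^ 2 * (c ^ 2 * τ) = s ^ 2 * τ := by
      field_simp
    rw [h1', h2']
  rw [hbs, h, key K τ hK hτ]
end

section
/- Let T > 0, let 0 < K₁ ≤ K < U, and let S : [0,T] → ℝ be a continuous function with S(0) ≤ U. Define H = inf{ t ∈ [0,T] : S(t) ≥ U } (with H = +∞ if this set is empty) and θ = min(H, T). Then the model-independent super-replication inequality holds: (K − S(T))^+ · 1_{the set {t ∈ [0,T] : S(t) ≥ U} is empty} ≤ ((U−K)/(U−K₁)) · (K₁ − S(T))^+ − ((K−K₁)/(U−K₁)) · (S(θ) − U). -/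
open MeasureTheory Filter Set

open Classical

/-- Brown–Hobson–Rogers model-independent super-replication of an up-and-out
put along a continuous path: with `θ = min(H_U, T)` where `H_U` is the first hitting time of the
barrier `U`, `(K−S_T)⁺·1_{no hit} ≤ ((U−K)/(U−K₁))(K₁−S_T)⁺ − ((K−K₁)/(U−K₁))(S_θ − U)`. -/
theorem bhr_super_replication (T U K K1 : ℝ)
    (hT : 0 < T) (hK1 : 0 < K1) (hK1K : K1 ≤ K) (hKU : K < U)
    (S : ℝ → ℝ) (hS : ContinuousOn S (Set.Icc 0 T)) (hS0 : S 0 ≤ U) :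
    max (K - S T) 0 *
        (if {t : ℝ | t ∈ Set.Icc 0 T ∧ U ≤ S t} = ∅ then 1 else 0) ≤
      (U - K) / (U - K1) * max (K1 - S T) 0 -
        (K - K1) / (U - K1) *
          (S (if {t : ℝ | t ∈ Set.Icc 0 T ∧ U ≤ S t}.Nonempty
                then min (sInf {t : ℝ | t ∈ Set.Icc 0 T ∧ U ≤ S t}) T else T) - U) := by

  set A : Set ℝ := {t : ℝ | t ∈ Set.Icc 0 T ∧ U ≤ S t} with hA
  have hd : (0:ℝ) < U - K1 := by linarith
  by_cases hne : A = ∅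
  · -- no hit: S T < U
    have hTmem : T ∈ Set.Icc (0:ℝ) T := ⟨le_of_lt hT, le_refl T⟩
    have hST : S T < U := by
      by_contra h
      have : T ∈ A := ⟨hTmem, le_of_not_gt h⟩
      rw [hne] at this
      exact this
    have hnon : ¬ A.Nonempty := by rw [hne]; exact Set.not_nonempty_empty
    rw [if_pos hne, if_neg hnon, mul_one]
    set x := S T with hx
    rw [div_mul_eq_mul_div, div_mul_eq_mul_div, ← sub_div, le_div_iff₀ hd]
    rcases le_total (K - x) 0 with hc | hc
    · rw [max_eq_right hc]
      rcases le_total (K1 - x) 0 with hc1 | hc1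
      · rw [max_eq_right hc1]; nlinarith
      · rw [max_eq_left hc1]; nlinarith
    · rw [max_eq_left hc]
      rcases le_total (K1 - x) 0 with hc1 | hc1
      · rw [max_eq_right hc1]; nlinarith
      · rw [max_eq_left hc1]; nlinarith
  · have hANe : A.Nonempty := Set.nonempty_iff_ne_empty.mpr hne
    have hAclosed : IsClosed A := by
      have : A = Set.Icc 0 T ∩ S ⁻¹' Set.Ici U := by
        ext t; simp [hA, Set.mem_Icc, and_comm]
      rw [this]
      exact hS.preimage_isClosed_of_isClosed isClosed_Icc isClosed_Ici
    have hbdd : BddBelow A := ⟨0, fun t ht => ht.1.1⟩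
    have hmem : sInf A ∈ A := hAclosed.csInf_mem hANe hbdd
    set h := sInf A with hh
    have h0 : 0 ≤ h := hmem.1.1
    have hhT : h ≤ T := hmem.1.2
    have hUSh : U ≤ S h := hmem.2
    have hShU : S h = U := by
      rcases eq_or_lt_of_le h0 with h0' | h0'
      · exact le_antisymm (h0' ▸ hS0) (h0' ▸ hUSh)
      · -- h > 0 : take left limit
        refine le_antisymm ?_ hUSh
        have hsub : Set.Ico (0:ℝ) h ⊆ Set.Icc 0 T :=
          fun t ht => ⟨ht.1, le_trans (le_of_lt ht.2) hhT⟩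
        have hcw : ContinuousWithinAt S (Set.Ico 0 h) h :=
          ((hS h ⟨h0, hhT⟩).mono hsub)
        have hclos : h ∈ closure (Set.Ico (0:ℝ) h) := by
          rw [closure_Ico (ne_of_lt h0')]
          exact ⟨h0, le_refl h⟩
        have hnb : (nhdsWithin h (Set.Ico (0:ℝ) h)).NeBot :=
          mem_closure_iff_nhdsWithin_neBot.mp hclos
        refine le_of_tendsto hcw ?_
        filter_upwards [self_mem_nhdsWithin] with t ht
        have htA : t ∉ A := fun hmem' => absurd (csInf_le hbdd hmem') (not_le.mpr ht.2)
        have : ¬ U ≤ S t := fun hle => htA ⟨hsub ht, hle⟩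
        linarith [not_le.mp this]
    have hmin : min h T = h := min_eq_left hhT
    simp only [if_neg hne, if_pos hANe, mul_zero, ← hh, hmin, hShU, sub_self, mul_zero,
      sub_zero]
    exact mul_nonneg (div_nonneg (by linarith) (by linarith)) (le_max_right _ _)
end
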